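/- arXiv:2308.08173 — 2 statements merged into one kernel-verified Lean document; each statement's English description precedes it below -/
import Mathlib

section
/- (Count update rule, Proposition 2.) Let G = (V, E) be a finite simple graph, let H be a connected finite simple graph with diameter d, let i, j ∈ V be distinct, and let G̃ be obtained from G by toggling the single edge {i, j}. Let N be the set of vertices whose distance from i is at most d in whichever of G or G̃ contains the edge {i, j}, and let G_S := G[N] and G̃_S := G̃[N] be the induced subgraphs of G and G̃ on N, respectively. Then sub(G̃, H) = sub(G, H) + sub(G̃_S, H) − sub(G_S, H), where sub(·, H) denotes the number of subgraphs isomorphic to H. -/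
/-!
Let `L` be whichever of `G`, `G̃` contains the edge `e = {i, j}`, so that the other one is
`L \ e`. Pushing subgraphs forward along the inclusions `L \ e ≤ L`, `L[N] → L` and
`(L \ e)[N] → L` identifies the copies of `H` in these graphs with the copies of `H` in `L`
that avoid `e`, lie inside `N`, or both. Hence `sub(L) - sub(L \ e)` counts the copies in `L`
using `e`, and `sub(L[N]) - sub((L \ e)[N])` counts those using `e` and lying inside `N`. These
are the same copies: a copy of `H` through `i` has all its vertices within distance `diam H` of
`i` in `L`.
-/

open SimpleGraph

/-- The subgraph count `sub(G, H)`: the number of subgraphs of `G` isomorphic to `H`. -/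
noncomputable def subCount {V W : Type*} (G : SimpleGraph V) (H : SimpleGraph W) : ℕ :=
  {A : G.Subgraph | Nonempty (A.coe ≃g H)}.ncard

/-- Toggling the single edge `{i, j}` of `G`: add it if absent, delete it if present. -/
def toggleEdge {V : Type*} (G : SimpleGraph V) (i j : V) : SimpleGraph V :=
  symmDiff G (SimpleGraph.edge i j)

namespace SimpleGraph

variable {U V W : Type*} {G : SimpleGraph U} {L : SimpleGraph V} {H : SimpleGraph W}

lemma Reachable.dist_map_le {u v : U} (h : G.Reachable u v) (f : G →g L) :
    L.dist (f u) (f v) ≤ G.dist u v := by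
  obtain ⟨p, hp⟩ := h.exists_walk_length_eq_dist
  exact hp ▸ p.length_map f ▸ dist_le (p.map f)

lemma Subgraph.dist_le_diam_of_iso [Finite W] (hH : H.Connected) {A : L.Subgraph}
    (e : A.coe ≃g H) {u v : V} (hu : u ∈ A.verts) (hv : v ∈ A.verts) :
    L.dist u v ≤ H.diam := by
  have : Nonempty W := hH.nonempty
  calc L.dist u v = L.dist ((A.hom.comp e.symm.toHom) (e ⟨u, hu⟩))
        ((A.hom.comp e.symm.toHom) (e ⟨v, hv⟩)) := by simp
    _ ≤ H.dist (e ⟨u, hu⟩) (e ⟨v, hv⟩) := (hH _ _).dist_map_le _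
    _ ≤ H.diam := dist_le_diam (connected_iff_ediam_ne_top.mp hH)

@[simp] lemma Copy.coe_induce (s : Set V) : ⇑(Copy.induce L s) = Subtype.val := rfl

namespace Subgraph

lemma comap_map_of_injective {f : G →g L} (hf : Function.Injective f) (A : G.Subgraph) :
    (A.map f).comap f = A := by
  ext u v
  · simp [hf.mem_set_image]
  · simp only [comap_adj, map_adj, Relation.Map, hf.eq_iff, exists_eq_right_right,
      exists_eq_right, and_iff_right_iff_imp]
    exact fun h => A.adj_sub h

lemma map_injective_of_injective {f : G →g L} (hf : Function.Injective f) :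
    Function.Injective (Subgraph.map f) :=
  Function.LeftInverse.injective (comap_map_of_injective hf)

lemma mem_range_map_iff {f : G →g L} (hf : Function.Injective f) {B : L.Subgraph} :
    B ∈ Set.range (Subgraph.map f) ↔
      B.verts ⊆ Set.range f ∧ ∀ u v, B.Adj (f u) (f v) → G.Adj u v := by
  constructor
  · rintro ⟨A, rfl⟩
    refine ⟨Set.image_subset_range _ _, fun u v h => ?_⟩
    simp only [map_adj, Relation.Map, hf.eq_iff] at h
    obtain ⟨u', v', h, rfl, rfl⟩ := h
    exact A.adj_sub h
  · rintro ⟨hverts, hadj⟩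
    refine ⟨B.comap f, ?_⟩
    ext x y
    · simp only [map_verts, comap_verts, Set.image_preimage_eq_iff.mpr hverts]
    · constructor
      · rintro ⟨u, v, h, rfl, rfl⟩
        exact h.2
      · intro h
        obtain ⟨u, rfl⟩ := hverts (B.edge_vert h)
        obtain ⟨v, rfl⟩ := hverts (B.edge_vert h.symm)
        exact ⟨u, v, ⟨hadj u v h, h⟩, rfl, rfl⟩

end Subgraph
end SimpleGraph

open SimpleGraph

section Counting

variable {U V W : Type*} {H : SimpleGraph W}

def subgraphCopies (L : SimpleGraph V) (H : SimpleGraph W) : Set L.Subgraph :=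
  {A | Nonempty (A.coe ≃g H)}

lemma subCount_eq_ncard (L : SimpleGraph V) (H : SimpleGraph W) :
    subCount L H = (subgraphCopies L H).ncard := rfl

lemma subCount_eq_ncard_inter_range {G : SimpleGraph U} {L : SimpleGraph V} (f : Copy G L) :
    subCount G H = (subgraphCopies L H ∩ Set.range (Subgraph.map f.toHom)).ncard := by
  have himage : subgraphCopies L H ∩ Set.range (Subgraph.map f.toHom) =
      Subgraph.map f.toHom '' subgraphCopies G H := by
    ext B
    constructor
    · rintro ⟨⟨e⟩, A, rfl⟩
      exact ⟨A, ⟨(f.isoSubgraphMap A).trans e⟩, rfl⟩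
    · rintro ⟨A, ⟨e⟩, rfl⟩
      exact ⟨⟨(f.isoSubgraphMap A).symm.trans e⟩, A, rfl⟩
  rw [himage, Set.ncard_image_of_injective _ (Subgraph.map_injective_of_injective f.injective)]
  rfl

lemma subCount_deleteEdges (L : SimpleGraph V) (s : Set (Sym2 V)) :
    subCount (L.deleteEdges s) H =
      (subgraphCopies L H ∩ {B | Disjoint B.edgeSet s}).ncard := by
  rw [subCount_eq_ncard_inter_range (Copy.ofLE _ _ (L.deleteEdges_le s))]
  congr! 2
  ext B
  simp only [Subgraph.mem_range_map_iff (Copy.injective _), Copy.coe_toHom, Copy.coe_ofLE,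
    Set.range_id, Set.subset_univ, Copy.toHom_apply, id_eq, deleteEdges_adj, true_and,
    Set.disjoint_left, Sym2.forall, Subgraph.mem_edgeSet, Set.mem_ofPred_eq]
  exact ⟨fun h u v huv => (h u v huv).2, fun h u v huv => ⟨B.adj_sub huv, h u v huv⟩⟩

lemma subCount_induce (L : SimpleGraph V) (N : Set V) :
    subCount (L.induce N) H = (subgraphCopies L H ∩ {B | B.verts ⊆ N}).ncard := by
  rw [subCount_eq_ncard_inter_range (Copy.induce L N)]
  congr! 2
  ext B
  simp only [Subgraph.mem_range_map_iff (Copy.injective _), Copy.coe_toHom, Copy.coe_induce,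
    Subtype.range_coe_subtype, Set.ofPred_mem_eq, Copy.toHom_apply, comap_adj,
    Function.Embedding.subtype_apply, Subtype.forall, Set.mem_ofPred_eq, and_iff_left_iff_imp]
  exact fun _ u _ v _ huv => B.adj_sub huv

lemma subCount_induce_deleteEdges (L : SimpleGraph V) (s : Set (Sym2 V)) (N : Set V) :
    subCount ((L.deleteEdges s).induce N) H =
      (subgraphCopies L H ∩ {B | B.verts ⊆ N ∧ Disjoint B.edgeSet s}).ncard := by
  rw [subCount_eq_ncard_inter_range ((Copy.ofLE _ _ (L.deleteEdges_le s)).comp (Copy.induce _ N))]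
  congr! 2
  ext B
  simp only [Subgraph.mem_range_map_iff (Copy.injective _), Copy.coe_toHom, Copy.coe_comp,
    Copy.coe_ofLE, Copy.coe_induce, CompTriple.comp_eq, Subtype.range_coe_subtype,
    Set.ofPred_mem_eq, Copy.toHom_apply, Copy.comp_apply, id_eq, comap_adj,
    Function.Embedding.subtype_apply, deleteEdges_adj, Subtype.forall, Set.disjoint_left,
    Sym2.forall, Subgraph.mem_edgeSet, Set.mem_ofPred_eq, and_congr_right_iff]
  refine fun hN => ⟨fun h u v huv => ?_, fun h u _ v _ huv => ⟨B.adj_sub huv, h u v huv⟩⟩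
  exact (h u (hN (B.edge_vert huv)) v (hN (B.edge_vert huv.symm)) huv).2

theorem subCount_sub_subCount_deleteEdges_eq [Finite V] [Finite W] (hH : H.Connected)
    (L : SimpleGraph V) (i j : V) {N : Set V} (hN : {v | L.dist i v ≤ H.diam} ⊆ N) :
    (subCount L H : ℤ) - subCount (L.deleteEdges {s(i, j)}) H =
      subCount (L.induce N) H - subCount ((L.deleteEdges {s(i, j)}).induce N) H := by
  rw [subCount_eq_ncard, subCount_deleteEdges, subCount_induce, subCount_induce_deleteEdges]
  set C := subgraphCopies L H
  set X : Set L.Subgraph := {B | s(i, j) ∈ B.edgeSet}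
  set Y : Set L.Subgraph := {B | B.verts ⊆ N}
  have hCX : C ∩ X ⊆ Y := by
    rintro B ⟨⟨e⟩, hB⟩ v hv
    exact hN (Subgraph.dist_le_diam_of_iso hH e (B.edge_vert hB) hv)
  have hdel : C ∩ {B | Disjoint B.edgeSet {s(i, j)}} = C \ X := by
    ext B; simp [X, Set.disjoint_singleton_right]
  have hind_del : C ∩ {B | B.verts ⊆ N ∧ Disjoint B.edgeSet {s(i, j)}} = (C ∩ Y) \ X := by
    ext B; simp [X, Y, Set.disjoint_singleton_right, and_assoc]
  have hCYX : C ∩ Y ∩ X = C ∩ X := by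
    rw [Set.inter_right_comm]; exact Set.inter_eq_left.mpr hCX
  have hsplit := Set.ncard_inter_add_ncard_sdiff_eq_ncard C X
  have hsplit_ind := Set.ncard_inter_add_ncard_sdiff_eq_ncard (C ∩ Y) X
  rw [hCYX] at hsplit_ind
  rw [hdel, hind_del]
  omega

end Counting

section Toggle

variable {V : Type*} {G : SimpleGraph V} {i j : V}

lemma toggleEdge_eq_deleteEdges (h : G.Adj i j) : toggleEdge G i j = G.deleteEdges {s(i, j)} := by
  ext u v
  simp only [toggleEdge, symmDiff_def, sup_adj, sdiff_adj, edge_adj, deleteEdges_adj,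
    Set.mem_singleton_iff, Sym2.eq_iff]
  grind [adj_comm, SimpleGraph.irrefl]

lemma deleteEdges_toggleEdge (h : ¬G.Adj i j) :
    (toggleEdge G i j).deleteEdges {s(i, j)} = G := by
  ext u v
  simp only [toggleEdge, symmDiff_def, sup_adj, sdiff_adj, edge_adj, deleteEdges_adj,
    Set.mem_singleton_iff, Sym2.eq_iff]
  grind [adj_comm]

end Toggle

theorem subCount_update_rule_general
    {V W : Type*} [Fintype V] [Fintype W]
    (G : SimpleGraph V) [DecidableRel G.Adj]
    (H : SimpleGraph W) (hH : H.Connected) (d : ℕ) (hd : H.diam = d)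
    (i j : V)
    (G' : SimpleGraph V) (hG' : G' = toggleEdge G i j)
    (N : Set V) (hN : N = {v | (if G.Adj i j then G else G').dist i v ≤ d}) :
    (subCount G' H : ℤ) =
      subCount G H + subCount (G'.induce N) H - subCount (G.induce N) H := by
  subst hG' hN hd
  by_cases h : G.Adj i j
  · have key := subCount_sub_subCount_deleteEdges_eq hH G i j subset_rfl
    rw [← toggleEdge_eq_deleteEdges h] at key
    rw [if_pos h]
    linarith
  · have key := subCount_sub_subCount_deleteEdges_eq hH (toggleEdge G i j) i j subset_rfl
    rw [deleteEdges_toggleEdge h] at key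
    rw [if_neg h]
    linarith

/-- Count update rule (Proposition 2). Let `G̃` be obtained from `G` by toggling the
single edge `{i, j}` (`i ≠ j`), let `H` be a connected pattern with diameter `d`, and let
`N` be the set of vertices at distance at most `d` from `i` in whichever of `G` or `G̃`
contains the edge `{i, j}`. With `G_S := G[N]` and `G̃_S := G̃[N]` the induced subgraphs
on `N`, we have `sub(G̃, H) = sub(G, H) + sub(G̃_S, H) − sub(G_S, H)`. -/
theorem subCount_update_rule
    {V W : Type*} [Fintype V] [Fintype W]
    (G : SimpleGraph V) [DecidableRel G.Adj]
    (H : SimpleGraph W) (hH : H.Connected) (d : ℕ) (hd : H.diam = d)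
    (i j : V) (hij : i ≠ j)
    (G' : SimpleGraph V) (hG' : G' = toggleEdge G i j)
    (N : Set V) (hN : N = {v | (if G.Adj i j then G else G').dist i v ≤ d}) :
    (subCount G' H : ℤ) =
      subCount G H + subCount (G'.induce N) H - subCount (G.induce N) H :=
  subCount_update_rule_general G H hH d hd i j G' hG' N hN
end

section
/- (Induced count update rule.) Let G = (V, E) be a finite simple graph, let H be a connected finite simple graph with diameter d, let i, j ∈ V be distinct, and let G̃ be obtained from G by toggling the single edge {i, j}. Let N be the set of vertices whose distance from i is at most d in whichever of G or G̃ contains the edge {i, j}, and let G_S := G[N] and G̃_S := G̃[N]. Then sub_I(G̃, H) = sub_I(G, H) + sub_I(G̃_S, H) − sub_I(G_S, H), where sub_I(·, H) denotes the number of induced subgraphs isomorphic to H. -/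
open SimpleGraph

/-- The induced subgraph count `sub_I(G, H)`: the number of vertex subsets `W` of `G`
such that the induced subgraph `G[W]` is isomorphic to `H`. -/
noncomputable def inducedSubCount {V W : Type*} (G : SimpleGraph V) (H : SimpleGraph W) : ℕ :=
  {s : Set V | Nonempty (G.induce s ≃g H)}.ncard

/-!
Toggling `{i, j}` changes only the induced subgraphs on vertex sets that contain both `i` and
`j`. If such a set induces a copy of the connected graph `H` in `G` or in `G̃`, then all its
vertices lie within distance `diam H` of `i` in `G ⊔ {ij}`, the graph of the two containing the
edge, i.e. inside `N`. So `G` and `G̃` have the same induced copies of `H` that are not contained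
in `N`, and the change of the count equals the change among copies inside `N`, which are the
copies in `G[N]` and `G̃[N]`.
-/

theorem Set.ncard_sub_ncard_eq_of_diff_eq {α : Type*} {A B C : Set α} (hA : A.Finite)
    (hB : B.Finite) (h : A \ C = B \ C) :
    (B.ncard : ℤ) - A.ncard = (B ∩ C).ncard - (A ∩ C).ncard := by
  have hAC := Set.ncard_inter_add_ncard_sdiff_eq_ncard A C hA
  have hBC := Set.ncard_inter_add_ncard_sdiff_eq_ncard B C hB
  rw [h] at hAC
  omega

namespace SimpleGraph

variable {V W : Type*}

theorem Hom.dist_le {G : SimpleGraph V} {K : SimpleGraph W} (f : G →g K) {u v : V}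
    (h : G.Reachable u v) : K.dist (f u) (f v) ≤ G.dist u v := by
  obtain ⟨p, hp⟩ := h.exists_walk_length_eq_dist
  simpa [hp] using K.dist_le (p.map f)

theorem dist_le_diam_of_iso_induce [Finite W] {G K : SimpleGraph V} (hle : G ≤ K)
    {H : SimpleGraph W} (hH : H.Connected) {s : Set V} (e : G.induce s ≃g H)
    {u v : V} (hu : u ∈ s) (hv : v ∈ s) : K.dist u v ≤ H.diam := by
  let f : H →g K := (Hom.ofLE hle).comp ((Embedding.induce s).toHom.comp e.symm.toHom)
  have hf : ∀ (w : V) (hw : w ∈ s), f (e ⟨w, hw⟩) = w := fun w hw => by simp [f]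
  have : Nonempty W := hH.nonempty
  have hdiam : H.ediam ≠ ⊤ := connected_iff_ediam_ne_top.mp hH
  calc K.dist u v = K.dist (f (e ⟨u, hu⟩)) (f (e ⟨v, hv⟩)) := by rw [hf, hf]
    _ ≤ H.dist (e ⟨u, hu⟩) (e ⟨v, hv⟩) := f.dist_le (hH.preconnected _ _)
    _ ≤ H.diam := dist_le_diam hdiam

noncomputable def induceInduceIso (G : SimpleGraph V) (N : Set V) (t : Set N) :
    (G.induce N).induce t ≃g G.induce (Subtype.val '' t) :=
  { Equiv.Set.image _ t Subtype.val_injective with map_rel_iff' := Iff.rfl }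

end SimpleGraph

section InducedCopies

variable {V W : Type*}

theorem induce_toggleEdge_of_not_both_mem (G : SimpleGraph V) {i j : V} {s : Set V}
    (h : ¬(i ∈ s ∧ j ∈ s)) : (toggleEdge G i j).induce s = G.induce s := by
  ext a b
  simp only [comap_adj, Function.Embedding.coe_subtype, toggleEdge, symmDiff_def,
    sup_adj, sdiff_adj, edge_adj]
  have : ¬((a : V) = i ∧ (b : V) = j ∨ (a : V) = j ∧ (b : V) = i) := by
    rintro (⟨rfl, rfl⟩ | ⟨rfl, rfl⟩)
    exacts [h ⟨a.2, b.2⟩, h ⟨b.2, a.2⟩]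
  tauto

theorem ite_toggleEdge_eq_sup_edge (G : SimpleGraph V) [DecidableRel G.Adj] (i j : V) :
    (if G.Adj i j then G else toggleEdge G i j) = G ⊔ edge i j := by
  split_ifs with h
  · exact (sup_edge_of_adj G h).symm
  · rw [toggleEdge, symmDiff_def, sdiff_edge G h, sup_sdiff_self_right]

def inducedCopies (G : SimpleGraph V) (H : SimpleGraph W) : Set (Set V) :=
  {s | Nonempty (G.induce s ≃g H)}

theorem inducedSubCount_eq_ncard (G : SimpleGraph V) (H : SimpleGraph W) :
    inducedSubCount G H = (inducedCopies G H).ncard := rfl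

theorem inducedSubCount_induce (G : SimpleGraph V) (N : Set V) (H : SimpleGraph W) :
    inducedSubCount (G.induce N) H = (inducedCopies G H ∩ 𝒫 N).ncard := by
  rw [inducedSubCount,
    ← Set.ncard_image_of_injective _ (Set.image_injective.2 Subtype.val_injective)]
  congr 1
  ext s
  constructor
  · rintro ⟨t, ⟨e⟩, rfl⟩
    exact ⟨⟨(induceInduceIso G N t).symm.trans e⟩, by simp⟩
  · rintro ⟨⟨e⟩, hs⟩
    have hst : Subtype.val '' (Subtype.val ⁻¹' s : Set N) = s := by simpa using hs
    refine ⟨_, ⟨(induceInduceIso G N _).trans ?_⟩, hst⟩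
    rwa [hst]

theorem mem_inducedCopies_toggleEdge_iff {G : SimpleGraph V} {H : SimpleGraph W} {i j : V}
    {s : Set V} (h : ¬(i ∈ s ∧ j ∈ s)) :
    s ∈ inducedCopies (toggleEdge G i j) H ↔ s ∈ inducedCopies G H := by
  simp only [inducedCopies, Set.mem_ofPred_eq, induce_toggleEdge_of_not_both_mem G h]

end InducedCopies

theorem inducedSubCount_update_rule_general
    {V W : Type*} [Fintype V] [Fintype W]
    (G : SimpleGraph V) [DecidableRel G.Adj]
    (H : SimpleGraph W) (hH : H.Connected) (d : ℕ) (hd : H.diam = d)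
    (i j : V)
    (G' : SimpleGraph V) (hG' : G' = toggleEdge G i j)
    (N : Set V) (hN : N = {v | (if G.Adj i j then G else G').dist i v ≤ d}) :
    (inducedSubCount G' H : ℤ) =
      inducedSubCount G H + inducedSubCount (G'.induce N) H
        - inducedSubCount (G.induce N) H := by
  subst hG' hd
  rw [ite_toggleEdge_eq_sup_edge] at hN
  have hball : ∀ K ≤ G ⊔ edge i j, ∀ s ∈ inducedCopies K H, i ∈ s → s ∈ 𝒫 N :=
    fun K hK s ⟨e⟩ hi v hv => hN ▸ dist_le_diam_of_iso_induce hK hH e hi hv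
  have hdiff : inducedCopies G H \ 𝒫 N = inducedCopies (toggleEdge G i j) H \ 𝒫 N := by
    ext s
    by_cases hs : i ∈ s ∧ j ∈ s
    · have hG := hball G le_sup_left s
      have hG' := hball _ symmDiff_le_sup s
      simp only [Set.mem_sdiff]
      tauto
    · rw [Set.mem_sdiff, Set.mem_sdiff, mem_inducedCopies_toggleEdge_iff hs]
  rw [inducedSubCount_induce, inducedSubCount_induce, inducedSubCount_eq_ncard,
    inducedSubCount_eq_ncard]
  linarith [Set.ncard_sub_ncard_eq_of_diff_eq (Set.toFinite _) (Set.toFinite _) hdiff]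

/-- Induced count update rule. Let `G̃` be obtained from `G` by toggling the single edge
`{i, j}` (`i ≠ j`), let `H` be a connected pattern with diameter `d`, and let `N` be the
set of vertices at distance at most `d` from `i` in whichever of `G` or `G̃` contains the
edge `{i, j}`. With `G_S := G[N]` and `G̃_S := G̃[N]` the induced subgraphs on `N`, we
have `sub_I(G̃, H) = sub_I(G, H) + sub_I(G̃_S, H) − sub_I(G_S, H)`. -/
theorem inducedSubCount_update_rule
    {V W : Type*} [Fintype V] [Fintype W]
    (G : SimpleGraph V) [DecidableRel G.Adj]
    (H : SimpleGraph W) (hH : H.Connected) (d : ℕ) (hd : H.diam = d)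
    (i j : V) (hij : i ≠ j)
    (G' : SimpleGraph V) (hG' : G' = toggleEdge G i j)
    (N : Set V) (hN : N = {v | (if G.Adj i j then G else G').dist i v ≤ d}) :
    (inducedSubCount G' H : ℤ) =
      inducedSubCount G H + inducedSubCount (G'.induce N) H
        - inducedSubCount (G.induce N) H :=
  inducedSubCount_update_rule_general G H hH d hd i j G' hG' N hN
end
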